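/- arXiv:2108.06375 — 3 statements merged into one kernel-verified Lean document; each statement's English description precedes it below -/
import Mathlib

section
/- (Two-sided stability bound) Under the setup of the previous statement, if additionally the constant function 1 lies in the span of the cardinal functions in the sense that Σ_{n=1}^N c_n(x) = 1 for all x ∈ Ω, then ‖I‖_∞ ≤ Σ_{n=1}^N |w_n| ≤ ‖I‖_∞ · Λ_N. In particular, if Λ_N = 1 then all weights are nonnegative (the cubature formula is stable). -/
open MeasureTheory

lemma ae_restrict_of_forall_mem_pred {α : Type*} [MeasurableSpace α] {μ : Measure α}
    {s : Set α} {f : α → ℝ} (hm : AEStronglyMeasurable f (μ.restrict s))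
    {p : ℝ → Prop} (hpm : MeasurableSet {x | p x}) (hp : ∀ y ∈ s, p (f y)) :
    ∀ᵐ y ∂μ.restrict s, p (f y) := by
  obtain ⟨f', hf'sm, hff'⟩ := hm
  have hne : μ.restrict s {y | f y ≠ f' y} = 0 := by
    simpa [Filter.EventuallyEq, ae_iff] using hff'
  set B := toMeasurable (μ.restrict s) {y | f y ≠ f' y} with hB
  have hBm : MeasurableSet B := measurableSet_toMeasurable _ _
  have hB0 : μ.restrict s B = 0 := by
    rw [hB, measure_toMeasurable]; exact hne
  have hBapp : μ (B ∩ s) = 0 := by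
    rwa [Measure.restrict_apply hBm] at hB0
  have hsub : {y | ¬ p (f' y)} ∩ s ⊆ B ∩ s := by
    intro y hy
    refine ⟨subset_toMeasurable _ _ ?_, hy.2⟩
    intro h
    exact hy.1 (h ▸ hp y hy.2)
  have hf'm : Measurable f' := hf'sm.measurable
  have hmeas : MeasurableSet {y | ¬ p (f' y)} := by
    have : {y | ¬ p (f' y)} = f' ⁻¹' {x | p x}ᶜ := rfl
    rw [this]; exact hf'm hpm.compl
  have h0 : μ.restrict s {y | ¬ p (f' y)} = 0 := by
    rw [Measure.restrict_apply hmeas]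
    exact measure_mono_null hsub hBapp
  have hf'ae : ∀ᵐ y ∂μ.restrict s, p (f' y) := by
    rw [ae_iff]; simpa using h0
  filter_upwards [hff', hf'ae] with y h1 h2
  rw [h1]; exact h2

/-- Two-sided stability bound: with cardinal functions `cₙ` such that `∑ₙ cₙ ≡ 1` on `Ω`
and weights `wₙ = ∫_Ω cₙ ω`, one has `∫_Ω ω ≤ ∑ₙ |wₙ| ≤ (∫_Ω ω) · Λ_N`; moreover if
`Λ_N = 1` then all weights are nonnegative. -/
theorem cubature_two_sided_stability {D N : ℕ}
    (Ω : Set (EuclideanSpace ℝ (Fin D)))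
    (ω : EuclideanSpace ℝ (Fin D) → ℝ) (hω : ∀ y, 0 ≤ ω y)
    (hωint : IntegrableOn ω Ω) (hpos : 0 < ∫ y in Ω, ω y)
    (x : Fin N → EuclideanSpace ℝ (Fin D)) (hx : ∀ n, x n ∈ Ω)
    (c : Fin N → EuclideanSpace ℝ (Fin D) → ℝ)
    (hcard : ∀ m n, c m (x n) = if m = n then (1:ℝ) else 0)
    (hcint : ∀ n, IntegrableOn (fun y => c n y * ω y) Ω)
    (hsum : ∀ y ∈ Ω, ∑ n, c n y = 1)
    (Λ : ℝ) (hΛ : ∀ y ∈ Ω, ∑ n, |c n y| ≤ Λ) :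
    ((∫ y in Ω, ω y) ≤ ∑ n, |∫ y in Ω, c n y * ω y|) ∧
    (∑ n, |∫ y in Ω, c n y * ω y| ≤ (∫ y in Ω, ω y) * Λ) ∧
    (Λ = 1 → ∀ n, 0 ≤ ∫ y in Ω, c n y * ω y) := by
  set μ := (volume : Measure (EuclideanSpace ℝ (Fin D)))
  -- integrability facts
  have hsumint : Integrable (fun y => ∑ n, c n y * ω y) (μ.restrict Ω) :=
    integrable_finset_sum _ (fun n _ => hcint n)
  have habsint : ∀ n, Integrable (fun y => |c n y * ω y|) (μ.restrict Ω) :=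
    fun n => (hcint n).abs
  have habssumint : Integrable (fun y => ∑ n, |c n y * ω y|) (μ.restrict Ω) :=
    integrable_finset_sum _ (fun n _ => habsint n)
  -- Step 1 : ∫ ω = ∑ wₙ
  have hdiffint : Integrable (fun y => (∑ n, c n y * ω y) - ω y) (μ.restrict Ω) :=
    hsumint.sub hωint
  have h1ae : ∀ᵐ y ∂μ.restrict Ω, (fun y => (∑ n, c n y * ω y) - ω y) y = 0 := by
    apply ae_restrict_of_forall_mem_pred hdiffint.aestronglyMeasurable
      (p := fun x => x = 0) (measurableSet_singleton (0:ℝ))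
    intro y hy
    simp only [← Finset.sum_mul, hsum y hy, one_mul, sub_self]
  have hint0 : ∫ y in Ω, ((∑ n, c n y * ω y) - ω y) ∂μ = 0 :=
    integral_eq_zero_of_ae h1ae
  have hsplit : ∫ y in Ω, ((∑ n, c n y * ω y) - ω y) ∂μ
      = (∫ y in Ω, (∑ n, c n y * ω y) ∂μ) - ∫ y in Ω, ω y ∂μ :=
    integral_sub hsumint hωint
  have hintsum : ∫ y in Ω, (∑ n, c n y * ω y) ∂μ = ∑ n, ∫ y in Ω, c n y * ω y ∂μ :=
    integral_finset_sum _ (fun n _ => hcint n)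
  have heq : (∫ y in Ω, ω y ∂μ) = ∑ n, ∫ y in Ω, c n y * ω y ∂μ := by
    have := hsplit.symm.trans hint0
    rw [hintsum] at this
    linarith
  -- Step 2 : ∑ |wₙ| ≤ Λ ∫ ω
  have hup : ∑ n, |∫ y in Ω, c n y * ω y ∂μ| ≤ (∫ y in Ω, ω y ∂μ) * Λ := by
    have h2 : ∑ n, |∫ y in Ω, c n y * ω y ∂μ| ≤ ∑ n, ∫ y in Ω, |c n y * ω y| ∂μ :=
      Finset.sum_le_sum (fun n _ => by
      simpa [Real.norm_eq_abs, abs_mul] using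
        norm_integral_le_integral_norm (μ := μ.restrict Ω) (fun y => c n y * ω y))
    have h3 : ∑ n, ∫ y in Ω, |c n y * ω y| ∂μ = ∫ y in Ω, (∑ n, |c n y * ω y|) ∂μ :=
      (integral_finset_sum _ (fun n _ => habsint n)).symm
    have hgint : Integrable (fun y => Λ * ω y - ∑ n, |c n y * ω y|) (μ.restrict Ω) :=
      (hωint.const_mul Λ).sub habssumint
    have hgae : ∀ᵐ y ∂μ.restrict Ω,
        (0:ℝ) ≤ (fun y => Λ * ω y - ∑ n, |c n y * ω y|) y := by
      apply ae_restrict_of_forall_mem_pred hgint.aestronglyMeasurable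
        (p := fun x => 0 ≤ x) measurableSet_Ici
      intro y hy
      have : ∑ n, |c n y * ω y| = (∑ n, |c n y|) * ω y := by
        rw [Finset.sum_mul]
        exact Finset.sum_congr rfl fun n _ => by
          rw [abs_mul, abs_of_nonneg (hω y)]
      rw [this]
      have := mul_le_mul_of_nonneg_right (hΛ y hy) (hω y)
      simpa [sub_nonneg] using this
    have h4 : 0 ≤ ∫ y in Ω, (Λ * ω y - ∑ n, |c n y * ω y|) ∂μ :=
      integral_nonneg_of_ae hgae
    have h5 : ∫ y in Ω, (Λ * ω y - ∑ n, |c n y * ω y|) ∂μ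
        = Λ * (∫ y in Ω, ω y ∂μ) - ∫ y in Ω, (∑ n, |c n y * ω y|) ∂μ := by
      rw [integral_sub (hωint.const_mul Λ) habssumint, integral_const_mul]
    calc ∑ n, |∫ y in Ω, c n y * ω y ∂μ| ≤ ∫ y in Ω, (∑ n, |c n y * ω y|) ∂μ := by
          rw [← h3]; exact h2
      _ ≤ (∫ y in Ω, ω y ∂μ) * Λ := by rw [mul_comm]; linarith [h4, h5.symm ▸ h4, h5 ▸ h4]
  refine ⟨?_, hup, ?_⟩
  · rw [heq]
    exact Finset.sum_le_sum fun n _ => le_abs_self _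
  · intro hΛ1 n
    have hle : ∑ m, |∫ y in Ω, c m y * ω y ∂μ| ≤ ∑ m, ∫ y in Ω, c m y * ω y ∂μ := by
      rw [← heq]
      simpa [hΛ1] using hup
    have hterm : ∀ m ∈ Finset.univ, (0:ℝ) ≤ |∫ y in Ω, c m y * ω y ∂μ| - ∫ y in Ω, c m y * ω y ∂μ :=
      fun m _ => by linarith [le_abs_self (∫ y in Ω, c m y * ω y ∂μ)]
    have hsingle : |∫ y in Ω, c n y * ω y ∂μ| - ∫ y in Ω, c n y * ω y ∂μ
        ≤ ∑ m, (|∫ y in Ω, c m y * ω y ∂μ| - ∫ y in Ω, c m y * ω y ∂μ) :=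
      Finset.single_le_sum hterm (Finset.mem_univ n)
    rw [Finset.sum_sub_distrib] at hsingle
    have habs : |∫ y in Ω, c n y * ω y ∂μ| ≤ ∫ y in Ω, c n y * ω y ∂μ := by linarith
    linarith [abs_nonneg (∫ y in Ω, c n y * ω y ∂μ)]
end

section
/- (Moment sign criterion with equal kernel moments) Under the hypotheses of the explicit cardinal representation, suppose additionally that all kernel moments are equal: ∫_Ω φ_n = ∫_Ω φ_m for all n, m, and that p_1 ≡ |Ω|^{-1/2}. Then ∫_Ω c_m ≥ 0 if and only if Σ_{k=1}^K p_k(x_m) ∫_Ω p_k(x) dx ≥ 0. -/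
open MeasureTheory

/-- Moment sign criterion with equal kernel moments: under the explicit cardinal
representation with `V = |Ω|`, equal kernel moments `∫_Ω φₙ = ∫_Ω φₘ`, positive kernel
moments, and `p₁ ≡ V^{-1/2}`, one has `∫_Ω cₘ ≥ 0 ↔ ∑ₖ pₖ(xₘ) ∫_Ω pₖ ≥ 0`. -/
theorem moment_sign_criterion {D N K : ℕ} (hN : 0 < N) (hK : 0 < K)
    (Ω : Set (EuclideanSpace ℝ (Fin D))) (hΩm : MeasurableSet Ω)
    (V : ℝ) (hVdef : V = (volume Ω).toReal) (hV : 0 < V)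
    (x : Fin N → EuclideanSpace ℝ (Fin D)) (hx : ∀ n, x n ∈ Ω)
    (hinj : Function.Injective x)
    (φ : Fin N → EuclideanSpace ℝ (Fin D) → ℝ)
    (hφδ : ∀ n m, φ n (x m) = if n = m then (1:ℝ) else 0)
    (hφint : ∀ n, IntegrableOn (φ n) Ω)
    (p : Fin K → EuclideanSpace ℝ (Fin D) → ℝ)
    (hpint : ∀ k, IntegrableOn (p k) Ω)
    (horth : ∀ k l, (V / N) * ∑ n, p k (x n) * p l (x n) = if k = l then (1:ℝ) else 0)
    (hp1 : ∀ y, p ⟨0, hK⟩ y = 1 / Real.sqrt V)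
    (hmomeq : ∀ n m, ∫ y in Ω, φ n y = ∫ y in Ω, φ m y)
    (hmompos : 0 < ∫ y in Ω, φ ⟨0, hN⟩ y) :
    ∀ m, (0 ≤ ∫ y in Ω, (φ m y
          - (V / N) * (∑ j, (∑ k, p k (x m) * p k (x j)) * φ j y)
          + (V / N) * ∑ k, p k (x m) * p k y))
      ↔ 0 ≤ ∑ k, p k (x m) * ∫ y in Ω, p k y := by
  intro m
  have hNpos : (0:ℝ) < (N:ℝ) := Nat.cast_pos.mpr hN
  have hVN : (0:ℝ) < V / N := div_pos hV hNpos
  have hsV : 0 < Real.sqrt V := Real.sqrt_pos.mpr hV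
  have hsVsq : Real.sqrt V * Real.sqrt V = V := Real.mul_self_sqrt hV.le
  -- node sums of the p k
  have hsum : ∀ k, ∑ n, p k (x n)
      = (if k = ⟨0, hK⟩ then (1:ℝ) else 0) * ((N:ℝ) * Real.sqrt V / V) := by
    intro k
    have h := horth k ⟨0, hK⟩
    simp only [hp1] at h
    have h2 : (V / N) * (1 / Real.sqrt V) * ∑ n, p k (x n)
        = if k = ⟨0, hK⟩ then (1:ℝ) else 0 := by
      rw [← h, Finset.mul_sum, Finset.mul_sum]
      exact Finset.sum_congr rfl fun n _ => by ring
    have hc : (V / N) * (1 / Real.sqrt V) ≠ 0 := by positivity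
    field_simp at h2 ⊢
    nlinarith [h2, hsVsq]
  -- the key normalization
  have hT : (V / N) * ∑ j, (∑ k, p k (x m) * p k (x j)) = 1 := by
    have h1 : ∑ j, ∑ k, p k (x m) * p k (x j)
        = ∑ k, p k (x m) * ∑ j, p k (x j) := by
      rw [Finset.sum_comm]
      exact Finset.sum_congr rfl fun k _ => by rw [Finset.mul_sum]
    rw [h1]
    have h2 : ∀ k, p k (x m) * ∑ j, p k (x j)
        = if k = ⟨0, hK⟩ then p k (x m) * ((N:ℝ) * Real.sqrt V / V) else 0 := by
      intro k
      rw [hsum k]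
      by_cases hk : k = ⟨0, hK⟩ <;> simp [hk]
    rw [Finset.sum_congr rfl fun k _ => h2 k]
    simp only [Finset.sum_ite_eq', Finset.mem_univ, if_true, hp1]
    field_simp
  -- integrability of the pieces
  have hA : IntegrableOn
      (fun y => (V / N) * (∑ j, (∑ k, p k (x m) * p k (x j)) * φ j y)) Ω := by
    exact (integrable_finset_sum _ fun j _ => (hφint j).const_mul _).const_mul _
  have hB : IntegrableOn (fun y => (V / N) * ∑ k, p k (x m) * p k y) Ω := by
    exact (integrable_finset_sum _ fun k _ => (hpint k).const_mul _).const_mul _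
  -- compute the integral
  have hsplit : (∫ y in Ω, (φ m y
          - (V / N) * (∑ j, (∑ k, p k (x m) * p k (x j)) * φ j y)
          + (V / N) * ∑ k, p k (x m) * p k y))
      = (∫ y in Ω, φ m y)
        - (∫ y in Ω, (V / N) * (∑ j, (∑ k, p k (x m) * p k (x j)) * φ j y))
        + (∫ y in Ω, (V / N) * ∑ k, p k (x m) * p k y) := by
    have h := integral_add ((hφint m).sub hA) hB
    simp only [Pi.sub_apply] at h
    rw [h, integral_sub (hφint m) hA]
  have hIA : (∫ y in Ω, (V / N) * (∑ j, (∑ k, p k (x m) * p k (x j)) * φ j y))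
      = ∫ y in Ω, φ m y := by
    rw [integral_const_mul, integral_finset_sum _ fun j _ => (hφint j).const_mul _]
    have : ∀ j : Fin N, (∫ y in Ω, (∑ k, p k (x m) * p k (x j)) * φ j y)
        = (∑ k, p k (x m) * p k (x j)) * ∫ y in Ω, φ m y := by
      intro j
      rw [integral_const_mul, hmomeq j m]
    rw [Finset.sum_congr rfl fun j _ => this j, ← Finset.sum_mul, ← mul_assoc, hT,
      one_mul]
  have hIB : (∫ y in Ω, (V / N) * ∑ k, p k (x m) * p k y)
      = (V / N) * ∑ k, p k (x m) * ∫ y in Ω, p k y := by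
    rw [integral_const_mul, integral_finset_sum _ fun k _ => (hpint k).const_mul _]
    congr 1
    exact Finset.sum_congr rfl fun k _ => integral_const_mul _ _
  rw [hsplit, hIA, hIB, sub_self, zero_add]
  exact mul_nonneg_iff_of_pos_left hVN
end

section
/- (Reference triangle integral for the cubic PHS) For α, β > 0, ∫_0^α ∫_0^{(β/α)x} ‖(x,y)‖₂³ dy dx = (α/40) [3α⁴ · arcsinh(β/α) + β(5α² + 2β²)√(α² + β²)]. -/
/-! Along the ray `y = t x` the integrand is `x³ (1 + t²)^{3/2}`, so substituting `y = t x` turns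
the inner integral into `x⁴ ∫₀^{β/α} (1 + t²)^{3/2} dt`. That one-variable integral has the
elementary primitive `((2t³ + 5t) √(1 + t²) + 3 arsinh t) / 8`, and `∫₀^α x⁴ dx = α⁵ / 5`. -/

noncomputable def sqrtOneAddSqCubePrimitive (t : ℝ) : ℝ :=
  ((2 * t ^ 3 + 5 * t) * Real.sqrt (1 + t ^ 2) + 3 * Real.arsinh t) / 8

lemma hasDerivAt_sqrtOneAddSqCubePrimitive (t : ℝ) :
    HasDerivAt sqrtOneAddSqCubePrimitive (Real.sqrt (1 + t ^ 2) ^ 3) t := by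
  have hpos : (0 : ℝ) < 1 + t ^ 2 := by positivity
  have hsq : HasDerivAt (fun t : ℝ => 1 + t ^ 2) (2 * t) t := by
    simpa using (hasDerivAt_pow 2 t).const_add 1
  have hsqrt := hsq.sqrt hpos.ne'
  have hpoly : HasDerivAt (fun t : ℝ => 2 * t ^ 3 + 5 * t) (6 * t ^ 2 + 5) t :=
    (((hasDerivAt_pow 3 t).const_mul 2).add ((hasDerivAt_id' t).const_mul 5)).congr_deriv (by ring)
  refine (((hpoly.mul hsqrt).add ((Real.hasDerivAt_arsinh t).const_mul 3)).div_const 8).congr_deriv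
    ?_
  set s := Real.sqrt (1 + t ^ 2)
  have hs : 0 < s := Real.sqrt_pos.2 hpos
  have hs2 : s ^ 2 = 1 + t ^ 2 := Real.sq_sqrt hpos.le
  field_simp
  linear_combination (-2 * t ^ 2 - 3 - 8 * s ^ 2) * hs2

lemma integral_sqrt_one_add_sq_pow_three (k : ℝ) :
    ∫ t in (0 : ℝ)..k, Real.sqrt (1 + t ^ 2) ^ 3 = sqrtOneAddSqCubePrimitive k := by
  rw [intervalIntegral.integral_eq_sub_of_hasDerivAt
    (fun t _ => hasDerivAt_sqrtOneAddSqCubePrimitive t)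
    ((by fun_prop : Continuous _).intervalIntegrable _ _)]
  simp [sqrtOneAddSqCubePrimitive]

lemma sqrt_sq_add_mul_sq {x : ℝ} (hx : 0 ≤ x) (t : ℝ) :
    Real.sqrt (x ^ 2 + (x * t) ^ 2) = x * Real.sqrt (1 + t ^ 2) := by
  rw [show x ^ 2 + (x * t) ^ 2 = x ^ 2 * (1 + t ^ 2) by ring,
    Real.sqrt_mul (sq_nonneg x), Real.sqrt_sq hx]

lemma integral_sqrt_sq_add_sq_pow_three {x : ℝ} (hx : 0 ≤ x) (k : ℝ) :
    ∫ y in (0 : ℝ)..(x * k), Real.sqrt (x ^ 2 + y ^ 2) ^ 3 =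
      x ^ 4 * sqrtOneAddSqCubePrimitive k := by
  have hsub := intervalIntegral.smul_integral_comp_mul_left
    (fun y => Real.sqrt (x ^ 2 + y ^ 2) ^ 3) x (a := 0) (b := k)
  rw [mul_zero, smul_eq_mul] at hsub
  simp_rw [sqrt_sq_add_mul_sq hx, mul_pow] at hsub
  rw [← hsub, intervalIntegral.integral_const_mul, integral_sqrt_one_add_sq_pow_three]
  ring

lemma sqrt_one_add_div_sq {α : ℝ} (hα : 0 < α) (β : ℝ) :
    Real.sqrt (1 + (β / α) ^ 2) = Real.sqrt (α ^ 2 + β ^ 2) / α := by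
  rw [show 1 + (β / α) ^ 2 = (α ^ 2 + β ^ 2) / α ^ 2 by field_simp,
    Real.sqrt_div' _ (sq_nonneg α), Real.sqrt_sq hα.le]

theorem cubic_phs_reference_triangle_general (α β : ℝ) (hα : 0 < α) :
    (∫ x in (0:ℝ)..α, ∫ y in (0:ℝ)..(β / α * x), Real.sqrt (x ^ 2 + y ^ 2) ^ 3) =
      α / 40 * (3 * α ^ 4 * Real.arsinh (β / α)
        + β * (5 * α ^ 2 + 2 * β ^ 2) * Real.sqrt (α ^ 2 + β ^ 2)) := by
  have hinner : ∀ x ∈ Set.uIcc 0 α, ∫ y in (0:ℝ)..(β / α * x), Real.sqrt (x ^ 2 + y ^ 2) ^ 3 =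
      x ^ 4 * sqrtOneAddSqCubePrimitive (β / α) := by
    intro x hx
    rw [Set.uIcc_of_le hα.le] at hx
    rw [mul_comm, integral_sqrt_sq_add_sq_pow_three hx.1]
  rw [intervalIntegral.integral_congr hinner, intervalIntegral.integral_mul_const, integral_pow,
    sqrtOneAddSqCubePrimitive, sqrt_one_add_div_sq hα]
  field_simp
  ring

/-- Reference triangle integral for the cubic PHS:
`∫₀^α ∫₀^{(β/α)x} ‖(x,y)‖₂³ dy dx
  = (α/40)[3α⁴ arcsinh(β/α) + β(5α² + 2β²)√(α² + β²)]`. -/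
theorem cubic_phs_reference_triangle (α β : ℝ) (hα : 0 < α) (hβ : 0 < β) :
    (∫ x in (0:ℝ)..α, ∫ y in (0:ℝ)..(β / α * x), Real.sqrt (x ^ 2 + y ^ 2) ^ 3) =
      α / 40 * (3 * α ^ 4 * Real.arsinh (β / α)
        + β * (5 * α ^ 2 + 2 * β ^ 2) * Real.sqrt (α ^ 2 + β ^ 2)) :=
  cubic_phs_reference_triangle_general α β hα
end
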